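/- There exists an absolute constant c > 0 such that the following holds: if X₁,…,X_m are i.i.d. random vectors uniformly distributed on the unit sphere of ℝ^n, X_S ∈ ℝ^{n×m} is the matrix with columns X₁,…,X_m, and v ∈ ℝ^n, w ∈ ℝ^m are fixed unit vectors, then for every u ≥ 0, P( |v^t X_S w| ≥ u ) ≤ 2·exp(−c·n·u²). -/

import Mathlib

open MeasureTheory ProbabilityTheory Real Matrix
open scoped ENNReal

/-- The Euclidean norm of a vector in `k → ℝ`. -/
noncomputable def euclNorm {k : Type*} [Fintype k] (v : k → ℝ) : ℝ :=
  Real.sqrt (∑ i, v i ^ 2)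

/-- A measure on `Fin n → ℝ` is the uniform (normalized Haar, i.e. rotation invariant)
distribution on the unit sphere if it is a probability measure supported on the unit
sphere which is invariant under every orthogonal transformation. -/
def IsUniformOnSphere {n : ℕ} (ν : Measure (Fin n → ℝ)) : Prop :=
  IsProbabilityMeasure ν ∧ ν {x | euclNorm x = 1} = 1 ∧
    ∀ Q : Matrix (Fin n) (Fin n) ℝ, Qᵀ * Q = 1 → ν.map Q.mulVec = ν

/-!
A reflection maps any unit vector to any other, so the law of `v ⬝ᵥ X` for `X` uniform on the
sphere is the same for every unit vector `v`, and one may take `v = (1, …, 1) / √n`. Averaging over the `2ⁿ` coordinate sign flips, which preserve the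
uniform distribution, gives `E exp (s ∑ xᵢ) = E ∏ cosh (s xᵢ) ≤ E exp (s² ∑ xᵢ² / 2) = exp (s² / 2)`,
so `v ⬝ᵥ X` is sub-Gaussian with variance proxy `1 / n`. Then `vᵀ X_S w = ∑ⱼ wⱼ (v ⬝ᵥ Xⱼ)` is a
weighted sum of independent such variables, sub-Gaussian with proxy `∑ⱼ wⱼ² / n = 1 / n`, and the
Chernoff bound on both tails gives `2 exp (-n u² / 2)`.
-/

open scoped NNReal

lemma euclNorm_eq_norm_toLp {ι : Type*} [Fintype ι] (v : ι → ℝ) :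
    euclNorm v = ‖WithLp.toLp 2 v‖ := by
  simp [euclNorm, EuclideanSpace.norm_eq]

lemma exists_orthogonal_mulVec_eq {ι : Type*} [Fintype ι] [DecidableEq ι] {v a : ι → ℝ}
    (h : euclNorm v = euclNorm a) : ∃ Q : Matrix ι ι ℝ, Qᵀ * Q = 1 ∧ Q *ᵥ v = a := by
  let b := EuclideanSpace.basisFun ι ℝ
  let f := Submodule.reflection (ℝ ∙ (WithLp.toLp 2 v - WithLp.toLp 2 a))ᗮ
  refine ⟨f.toMatrix b.toBasis b.toBasis, (Matrix.mem_orthogonalGroup_iff' _ _).1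
    (f.toMatrix_mem_unitaryGroup b b), ?_⟩
  have hf : f (WithLp.toLp 2 v) = WithLp.toLp 2 a :=
    Submodule.reflection_sub (by simpa [euclNorm_eq_norm_toLp] using h)
  have := LinearMap.toMatrix_mulVec_repr b.toBasis b.toBasis f.toLinearMap (WithLp.toLp 2 v)
  exact this.trans (congrArg (fun y => ⇑(b.toBasis.repr y)) hf)

namespace IsUniformOnSphere

variable {n : ℕ} {ν : Measure (Fin n → ℝ)}

lemma dim_ne_zero (hν : IsUniformOnSphere ν) : n ≠ 0 := by
  rintro rfl
  have hs := hν.2.1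
  simp [euclNorm] at hs

lemma ae_euclNorm_eq_one (hν : IsUniformOnSphere ν) : ∀ᵐ x ∂ν, euclNorm x = 1 := by
  have := hν.1
  rw [ae_iff_measure_eq, hν.2.1, measure_univ]
  exact (measurableSet_eq_fun (by unfold euclNorm; fun_prop) measurable_const).nullMeasurableSet

lemma ae_norm_le_one (hν : IsUniformOnSphere ν) : ∀ᵐ x ∂ν, ‖x‖ ≤ 1 := by
  filter_upwards [hν.ae_euclNorm_eq_one] with x hx
  refine (pi_norm_le_iff_of_nonneg zero_le_one).2 fun i => ?_
  rw [euclNorm_eq_norm_toLp] at hx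
  exact hx ▸ PiLp.norm_apply_le (WithLp.toLp 2 x) i

lemma integrable_of_continuous (hν : IsUniformOnSphere ν) {f : (Fin n → ℝ) → ℝ}
    (hf : Continuous f) : Integrable f ν := by
  have := hν.1
  have h := hf.continuousOn.integrableOn_compact (μ := ν) (isCompact_closedBall 0 1)
  rwa [IntegrableOn, Measure.restrict_eq_self_of_ae_mem (by simpa using hν.ae_norm_le_one)] at h

lemma integral_comp_mulVec (hν : IsUniformOnSphere ν) {Q : Matrix (Fin n) (Fin n) ℝ}
    (hQ : Qᵀ * Q = 1) {f : (Fin n → ℝ) → ℝ} (hf : AEStronglyMeasurable f ν) :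
    ∫ x, f (Q *ᵥ x) ∂ν = ∫ x, f x ∂ν := by
  have hQν := hν.2.2 Q hQ
  rw [← integral_map (by fun_prop) (by rwa [hQν]), hQν]

lemma map_dotProduct_eq (hν : IsUniformOnSphere ν) {v a : Fin n → ℝ}
    (h : euclNorm v = euclNorm a) : ν.map (v ⬝ᵥ ·) = ν.map (a ⬝ᵥ ·) := by
  obtain ⟨Q, hQ, hQv⟩ := exists_orthogonal_mulVec_eq h
  have hdot : (a ⬝ᵥ ·) ∘ Q.mulVec = (v ⬝ᵥ ·) := by
    ext x
    simp [← hQv, dotProduct_mulVec, ← mulVec_transpose, hQ]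
  rw [← hdot, ← Measure.map_map (by fun_prop) (by fun_prop), hν.2.2 Q hQ]

lemma integral_exp_sum_eq_integral_prod_cosh (hν : IsUniformOnSphere ν) (s : ℝ) :
    ∫ x, exp (s * ∑ i, x i) ∂ν = ∫ x, ∏ i, cosh (s * x i) ∂ν := by
  let signs := Fintype.piFinset fun _ : Fin n => ({1, -1} : Finset ℝ)
  have hpair : (1 : ℝ) ≠ -1 := by norm_num
  have hcard : (signs.card : ℝ) = 2 ^ n := by
    simp [signs, Fintype.card_piFinset, Finset.card_pair hpair]
  have hflip : ∀ ε ∈ signs,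
      ∫ x, ∏ i, exp (s * (ε i * x i)) ∂ν = ∫ x, exp (s * ∑ i, x i) ∂ν := by
    intro ε hε
    have hQ : (diagonal ε)ᵀ * diagonal ε = 1 := by
      rw [diagonal_transpose, diagonal_mul_diagonal, ← diagonal_one]
      congr with i
      have hεi : ε i = 1 ∨ ε i = -1 := by simpa using Fintype.mem_piFinset.1 hε i
      rcases hεi with h | h <;> simp [h]
    rw [← hν.integral_comp_mulVec hQ (f := fun x => exp (s * ∑ i, x i)) (by fun_prop)]
    simp [mulVec_diagonal, Finset.mul_sum, Real.exp_sum]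
  have hcosh : ∀ x : Fin n → ℝ,
      ∏ i, cosh (s * x i) = (2 ^ n)⁻¹ * ∑ ε ∈ signs, ∏ i, exp (s * (ε i * x i)) := by
    intro x
    rw [Finset.sum_prod_piFinset _ fun i e => exp (s * (e * x i))]
    simp [Finset.sum_pair hpair, cosh_eq, div_eq_inv_mul, Finset.prod_mul_distrib]
  calc ∫ x, exp (s * ∑ i, x i) ∂ν
      = (2 ^ n)⁻¹ * ∑ ε ∈ signs, ∫ x, exp (s * ∑ i, x i) ∂ν := by
        rw [Finset.sum_const, nsmul_eq_mul, hcard]; field_simp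
    _ = (2 ^ n)⁻¹ * ∑ ε ∈ signs, ∫ x, ∏ i, exp (s * (ε i * x i)) ∂ν := by
        rw [Finset.sum_congr rfl hflip]
    _ = ∫ x, ∏ i, cosh (s * x i) ∂ν := by
        simp_rw [hcosh]
        rw [integral_const_mul, integral_finsetSum _
          fun ε _ => hν.integrable_of_continuous (by fun_prop)]

lemma integral_exp_sum_le (hν : IsUniformOnSphere ν) (s : ℝ) :
    ∫ x, exp (s * ∑ i, x i) ∂ν ≤ exp (s ^ 2 / 2) := by
  have := hν.1
  rw [hν.integral_exp_sum_eq_integral_prod_cosh]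
  calc ∫ x, ∏ i, cosh (s * x i) ∂ν ≤ ∫ _, exp (s ^ 2 / 2) ∂ν := by
        refine integral_mono_ae (hν.integrable_of_continuous (by fun_prop))
          (integrable_const _) ?_
        filter_upwards [hν.ae_euclNorm_eq_one] with x hx
        have hx2 : ∑ i, x i ^ 2 = 1 := Real.sqrt_eq_one.1 hx
        calc ∏ i, cosh (s * x i) ≤ ∏ i, exp ((s * x i) ^ 2 / 2) :=
              Finset.prod_le_prod (fun i _ => (cosh_pos _).le) fun i _ => cosh_le_exp_half_sq _
          _ = exp (s ^ 2 / 2) := by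
              rw [← Real.exp_sum]
              simp_rw [mul_pow, mul_div_right_comm _ (x _ ^ 2)]
              rw [← Finset.mul_sum, hx2, mul_one]
    _ = exp (s ^ 2 / 2) := by simp

lemma hasSubgaussianMGF_dotProduct (hν : IsUniformOnSphere ν) {v : Fin n → ℝ}
    (hv : euclNorm v = 1) : HasSubgaussianMGF (v ⬝ᵥ ·) (n : ℝ≥0)⁻¹ ν := by
  have hn : (0 : ℝ) < n := by have := hν.dim_ne_zero; positivity
  let a : Fin n → ℝ := fun _ => (√n)⁻¹
  have ha : euclNorm a = 1 := by
    simp [euclNorm, a, Real.sq_sqrt hn.le, hn.ne']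
  rw [← HasSubgaussianMGF.id_map_iff (by fun_prop), hν.map_dotProduct_eq (hv.trans ha.symm),
    HasSubgaussianMGF.id_map_iff (by fun_prop)]
  refine ⟨fun t => hν.integrable_of_continuous (by fun_prop), fun t => ?_⟩
  calc mgf (a ⬝ᵥ ·) ν t = ∫ x, exp (t / √n * ∑ i, x i) ∂ν := by
        simp only [mgf, a, dotProduct, ← Finset.mul_sum, div_eq_mul_inv, mul_assoc]
    _ ≤ exp ((t / √n) ^ 2 / 2) := hν.integral_exp_sum_le _
    _ = exp ((n : ℝ≥0)⁻¹ * t ^ 2 / 2) := by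
        rw [div_pow, Real.sq_sqrt hn.le]; push_cast; ring_nf

end IsUniformOnSphere

namespace ProbabilityTheory.HasSubgaussianMGF

variable {Ω : Type*} {_ : MeasurableSpace Ω} {μ : Measure Ω}

lemma sum_mul_of_iIndepFun {ι : Type*} [Fintype ι] {Y : ι → Ω → ℝ} (h_indep : iIndepFun Y μ)
    {c : ℝ≥0} (hY : ∀ i, HasSubgaussianMGF (Y i) c μ) (w : ι → ℝ) :
    HasSubgaussianMGF (fun ω => ∑ i, w i * Y i ω) ((∑ i, ‖w i‖₊ ^ 2) * c) μ := by
  have hsum := sum_of_iIndepFun (s := .univ)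
    (h_indep.comp (fun i y => w i * y) fun i => by fun_prop) fun i _ => (hY i).const_mul (w i)
  have hc : ∑ i, ‖w i‖₊ ^ 2 * c = ∑ i, ⟨w i ^ 2, sq_nonneg (w i)⟩ * c :=
    Finset.sum_congr rfl fun i _ => congrArg (· * c) (NNReal.eq (by simp; rfl))
  rw [Finset.sum_mul, hc]
  exact hsum

lemma measureReal_abs_ge_le {X : Ω → ℝ} {c : ℝ≥0} (h : HasSubgaussianMGF X c μ) {ε : ℝ}
    (hε : 0 ≤ ε) : μ.real {ω | ε ≤ |X ω|} ≤ 2 * exp (-ε ^ 2 / (2 * c)) := by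
  have hunion : {ω | ε ≤ |X ω|} = {ω | ε ≤ X ω} ∪ {ω | ε ≤ (-X) ω} := by
    ext ω
    simp [le_abs]
  rw [hunion, two_mul]
  exact (measureReal_union_le _ _).trans
    (add_le_add (h.measure_ge_le hε) (h.neg.measure_ge_le hε))

end ProbabilityTheory.HasSubgaussianMGF

/-- There is an absolute constant `c > 0` such that: if `X₁,…,X_m` are i.i.d. random
vectors uniformly distributed on the unit sphere of `ℝ^n`, `X_S ∈ ℝ^{n×m}` is the matrix
with columns `X₁,…,X_m`, and `v ∈ ℝ^n`, `w ∈ ℝ^m` are fixed unit vectors, then for every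
`u ≥ 0`, `P(|vᵀ X_S w| ≥ u) ≤ 2·exp(-c·n·u²)`.  Here
`vᵀ X_S w = ∑_j (∑_i v i · X_j(i)) · w j`. -/
theorem sphere_bilinear_subgaussian :
    ∃ c : ℝ, 0 < c ∧
      ∀ (Ω : Type) (_ : MeasurableSpace Ω) (μ : Measure Ω), IsProbabilityMeasure μ →
        ∀ (n m : ℕ) (X : Fin m → Ω → (Fin n → ℝ)),
          iIndepFun X μ →
          (∀ j, IsUniformOnSphere (μ.map (X j))) →
          ∀ v : Fin n → ℝ, euclNorm v = 1 →
            ∀ w : Fin m → ℝ, euclNorm w = 1 →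
              ∀ u : ℝ, 0 ≤ u →
                (μ {ω | u ≤ |∑ j, (∑ i, v i * X j ω i) * w j|}).toReal ≤
                  2 * Real.exp (-c * n * u ^ 2) := by
  refine ⟨1 / 2, by norm_num, fun Ω _ μ _ n m X hindep hunif v hv w hw u hu => ?_⟩
  have hY : ∀ j, HasSubgaussianMGF ((v ⬝ᵥ ·) ∘ X j) (n : ℝ≥0)⁻¹ μ := fun j =>
    ((hunif j).hasSubgaussianMGF_dotProduct hv).of_map (.of_map_ne_zero (hunif j).1.ne_zero)
  have hsum := HasSubgaussianMGF.sum_mul_of_iIndepFun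
    (hindep.comp (fun _ x => v ⬝ᵥ x) fun _ => by fun_prop) hY w
  convert hsum.measureReal_abs_ge_le hu using 3
  · simp [Measure.real, dotProduct, mul_comm]
  · push_cast
    simp only [Real.norm_eq_abs, sq_abs]
    rw [Real.sqrt_eq_one.1 hw, one_mul, div_mul_eq_div_div, div_inv_eq_mul]
    ring
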